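/- Let Φ = (G, φ) be a connected T-gain graph. Then the multiset of eigenvalues of A(Φ) equals the multiset of eigenvalues of A(G) if and only if Φ is balanced. -/

import Mathlib

open scoped Classical

variable {V : Type*}

/-- The adjacency matrix of a `𝕋`-gain graph `Φ = (G, φ)`. -/
noncomputable def gainAdj [Fintype V] (G : SimpleGraph V) (φ : V → V → ℂ) :
    Matrix V V ℂ := fun i j => if G.Adj i j then φ i j else 0

/-- `φ` is a complex unit gain function on `G`: each gain is a unit complex number and
`φ(e_{ji}) = φ(e_{ij})⁻¹`. -/
def IsGain (G : SimpleGraph V) (φ : V → V → ℂ) : Prop :=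
  (∀ i j, G.Adj i j → ‖φ i j‖ = 1) ∧ (∀ i j, G.Adj i j → φ i j * φ j i = 1)

/-- The gain of a walk: the product of the gains of its (oriented) edges. -/
noncomputable def walkGain (φ : V → V → ℂ) {G : SimpleGraph V} {u v : V} (p : G.Walk u v) : ℂ :=
  (p.darts.map (fun d => φ d.toProd.1 d.toProd.2)).prod

/-- A gain graph is balanced if every cycle has gain `1`. -/
def IsBalanced (G : SimpleGraph V) (φ : V → V → ℂ) : Prop :=
  ∀ (v : V) (p : G.Walk v v), p.IsCycle → walkGain φ p = 1

/-- `Σ_{C ∈ C_i(G)} Re(φ(C))`: each unoriented, unrooted cycle of length `i` corresponds to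
exactly `2·i` rooted oriented cycle walks, all having the same real part of the gain. -/
noncomputable def cycleRSum (G : SimpleGraph V) (φ : V → V → ℂ) (i : ℕ) : ℝ :=
  (∑ᶠ q : {q : Σ' v : V, G.Walk v v // q.snd.IsCycle ∧ q.snd.length = i},
      (walkGain φ q.1.snd).re) / (2 * i)

/-!
If `Φ` is balanced, every closed walk has gain `1`: `Walk.bypass` only cuts out closed detours,
each of which closes a path by a single edge and so is a cycle or an edge traversed back and
forth. On a connected graph this gives `φ i j = θ i / θ j`, where `θ v` is the gain of a walk from
`v` to a fixed root, so `A(Φ)` is diagonally similar to `A(G)` and has the same characteristic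
polynomial.

Conversely, equal spectra give `tr A(Φ)^k = tr A(G)^k` for every `k`. The left side is the sum of
the gains of the closed walks of length `k`, the right side their number; as the gains have
modulus one, each of them, in particular the gain of every cycle, equals `1`.
-/

open Matrix SimpleGraph Finset

namespace Matrix.IsHermitian

variable {𝕜 n : Type*} [RCLike 𝕜] [Fintype n] [DecidableEq n] {A B : Matrix n n 𝕜}

lemma trace_pow_eq_sum_eigenvalues_pow (hA : A.IsHermitian) (k : ℕ) :
    (A ^ k).trace = ∑ i, (hA.eigenvalues i : 𝕜) ^ k := by
  conv_lhs => rw [hA.spectral_theorem]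
  rw [← map_pow, Unitary.conjStarAlgAut_apply, trace_mul_cycle, Unitary.coe_star_mul_self,
    Matrix.one_mul, diagonal_pow, trace_diagonal]
  rfl

lemma trace_pow_eq_of_eigenvalues_eq (hA : A.IsHermitian) (hB : B.IsHermitian)
    (h : Finset.univ.val.map hA.eigenvalues = Finset.univ.val.map hB.eigenvalues) (k : ℕ) :
    (A ^ k).trace = (B ^ k).trace := by
  have := congrArg (fun s => (s.map fun r : ℝ => (r : 𝕜) ^ k).sum) h
  simp only [Multiset.map_map] at this
  rw [hA.trace_pow_eq_sum_eigenvalues_pow, hB.trace_pow_eq_sum_eigenvalues_pow]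
  exact this

lemma eigenvalues_eq_of_charpoly_eq (hA : A.IsHermitian) (hB : B.IsHermitian)
    (h : A.charpoly = B.charpoly) :
    Finset.univ.val.map hA.eigenvalues = Finset.univ.val.map hB.eigenvalues := by
  have := hA.roots_charpoly_eq_eigenvalues
  rw [h, hB.roots_charpoly_eq_eigenvalues, ← Multiset.map_map, ← Multiset.map_map] at this
  exact Multiset.map_injective RCLike.ofReal_injective this.symm

end Matrix.IsHermitian

lemma Finset.forall_eq_one_of_sum_eq_card {ι : Type*} {s : Finset ι} {f : ι → ℂ}
    (hf : ∀ i ∈ s, ‖f i‖ ≤ 1) (h : ∑ i ∈ s, f i = #s) : ∀ i ∈ s, f i = 1 := by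
  have hre_le : ∀ i ∈ s, (f i).re ≤ 1 := fun i hi => (Complex.re_le_norm _).trans (hf i hi)
  have hre_sum : ∑ i ∈ s, (f i).re = ∑ i ∈ s, (1 : ℝ) := by
    simpa using congrArg Complex.re h
  intro i hi
  have hre : (f i).re = 1 := (sum_eq_sum_iff_of_le hre_le).mp hre_sum i hi
  have him : (f i).im = 0 := Complex.abs_re_eq_norm.mp <|
    le_antisymm (Complex.abs_re_le_norm _) (by rw [hre, abs_one]; exact hf i hi)
  exact Complex.ext hre him

section WalkGain

variable {G : SimpleGraph V} {φ : V → V → ℂ}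

@[simp] lemma walkGain_nil {v : V} : walkGain φ (Walk.nil : G.Walk v v) = 1 := by
  simp [walkGain]

@[simp] lemma walkGain_cons {u v w : V} (h : G.Adj u v) (p : G.Walk v w) :
    walkGain φ (Walk.cons h p) = φ u v * walkGain φ p := by
  simp [walkGain]

@[simp] lemma walkGain_append {u v w : V} (p : G.Walk u v) (q : G.Walk v w) :
    walkGain φ (p.append q) = walkGain φ p * walkGain φ q := by
  simp [walkGain, Walk.darts_append]

lemma walkGain_const_one {u v : V} (p : G.Walk u v) : walkGain (fun _ _ => 1) p = 1 := by
  simp [walkGain]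

lemma norm_walkGain (hφ : IsGain G φ) {u v : V} (p : G.Walk u v) : ‖walkGain φ p‖ = 1 := by
  induction p with
  | nil => simp
  | cons h p ih => rw [walkGain_cons, norm_mul, hφ.1 _ _ h, ih, one_mul]

lemma walkGain_mul_walkGain_reverse (hφ : IsGain G φ) {u v : V} (p : G.Walk u v) :
    walkGain φ p * walkGain φ p.reverse = 1 := by
  induction p with
  | nil => simp
  | @cons a b c h p ih =>
    calc walkGain φ (Walk.cons h p) * walkGain φ (Walk.cons h p).reverse
        = (walkGain φ p * walkGain φ p.reverse) * (φ a b * φ b a) := by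
          simp only [walkGain_cons, Walk.reverse_cons, walkGain_append, walkGain_nil, mul_one]
          ring
      _ = 1 := by rw [ih, hφ.2 _ _ h, one_mul]

lemma walkGain_cons_eq_one_of_isPath (hφ : IsGain G φ) (hb : IsBalanced G φ) {u w : V}
    (h : G.Adj u w) {q : G.Walk w u} (hq : q.IsPath) : walkGain φ (Walk.cons h q) = 1 := by
  by_cases he : s(u, w) ∈ q.edges
  · cases q with
    | nil => exact (G.irrefl h).elim
    | @cons _ x _ h' r =>
      rw [Walk.cons_isPath_iff] at hq
      have hx : x = u := by
        rcases List.mem_cons.mp he with he | he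
        · exact (Sym2.congr_right.mp (Sym2.eq_swap.trans he)).symm
        · exact absurd (Walk.snd_mem_support_of_mem_edges r he) hq.2
      subst hx
      rw [Walk.eq_nil_iff_nil.mpr (Walk.isPath_iff_nil.mp hq.1), walkGain_cons, walkGain_cons,
        walkGain_nil, mul_one, hφ.2 _ _ h]
  · exact hb _ _ ((Walk.cons_isCycle_iff q h).mpr ⟨hq, he⟩)

lemma walkGain_bypass (hφ : IsGain G φ) (hb : IsBalanced G φ) {u v : V} (p : G.Walk u v) :
    walkGain φ p.bypass = walkGain φ p := by
  induction p with
  | nil => rfl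
  | @cons u w v h p ih =>
    rw [Walk.bypass]
    split_ifs with hs
    · have hsplit := congrArg (walkGain φ) (p.bypass.take_spec hs)
      rw [walkGain_append, ih] at hsplit
      rw [walkGain_cons, ← hsplit, ← mul_assoc, ← walkGain_cons h,
        walkGain_cons_eq_one_of_isPath hφ hb h (p.bypass_isPath.takeUntil hs), one_mul]
    · rw [walkGain_cons, walkGain_cons, ih]

lemma IsBalanced.walkGain_eq_one (hφ : IsGain G φ) (hb : IsBalanced G φ) {v : V}
    (c : G.Walk v v) : walkGain φ c = 1 := by
  rw [← walkGain_bypass hφ hb, Walk.eq_nil_iff_nil.mpr (Walk.isPath_iff_nil.mp c.bypass_isPath),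
    walkGain_nil]

lemma IsBalanced.walkGain_eq (hφ : IsGain G φ) (hb : IsBalanced G φ) {u v : V}
    (p q : G.Walk u v) : walkGain φ p = walkGain φ q := by
  have h := hb.walkGain_eq_one hφ (p.append q.reverse)
  rw [walkGain_append] at h
  calc walkGain φ p = walkGain φ p * (walkGain φ q * walkGain φ q.reverse) := by
        rw [walkGain_mul_walkGain_reverse hφ, mul_one]
    _ = walkGain φ q := by rw [mul_left_comm, h, mul_one]

lemma IsBalanced.exists_potential (hconn : G.Connected) (hφ : IsGain G φ)
    (hb : IsBalanced G φ) :
    ∃ θ : V → ℂ, (∀ v, θ v ≠ 0) ∧ ∀ i j, G.Adj i j → φ i j = θ i * (θ j)⁻¹ := by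
  obtain ⟨r⟩ := hconn.nonempty
  set θ : V → ℂ := fun v => walkGain φ (hconn.preconnected v r).some
  have hθ : ∀ v, θ v ≠ 0 := fun v =>
    ne_zero_of_norm_ne_zero (by rw [norm_walkGain hφ]; exact one_ne_zero)
  refine ⟨θ, hθ, fun i j hij => ?_⟩
  have h := hb.walkGain_eq hφ (Walk.cons hij (hconn.preconnected j r).some)
    (hconn.preconnected i r).some
  change φ i j * θ j = θ i at h
  rw [← h, mul_inv_cancel_right₀ (hθ j)]

end WalkGain

lemma adjMatrix_eq_gainAdj_const_one [Fintype V] (G : SimpleGraph V) [DecidableRel G.Adj] :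
    G.adjMatrix ℂ = gainAdj G (fun _ _ => 1) := by
  ext i j
  simp [gainAdj, adjMatrix_apply]

section GainAdj

variable [Fintype V] [DecidableEq V] {G : SimpleGraph V} {φ : V → V → ℂ}

lemma gainAdj_eq_diagonal_mul_adjMatrix_mul [DecidableRel G.Adj]
    {θ : V → ℂ} (hθ : ∀ i j, G.Adj i j → φ i j = θ i * (θ j)⁻¹) :
    gainAdj G φ = diagonal θ * G.adjMatrix ℂ * diagonal θ⁻¹ := by
  ext i j
  rw [mul_diagonal, diagonal_mul]
  by_cases hij : G.Adj i j <;> simp [gainAdj, hij, hθ]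

lemma IsBalanced.charpoly_gainAdj [DecidableRel G.Adj]
    (hconn : G.Connected) (hφ : IsGain G φ) (hb : IsBalanced G φ) :
    (gainAdj G φ).charpoly = (G.adjMatrix ℂ).charpoly := by
  obtain ⟨θ, hθ0, hθ⟩ := hb.exists_potential hconn hφ
  have hinv : diagonal θ⁻¹ * diagonal θ = 1 := by simp [diagonal_mul_diagonal, hθ0]
  rw [gainAdj_eq_diagonal_mul_adjMatrix_mul hθ, Matrix.mul_assoc, charpoly_mul_comm,
    Matrix.mul_assoc, hinv, Matrix.mul_one]

lemma gainAdj_pow_apply (k : ℕ) (u v : V) :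
    (gainAdj G φ ^ k) u v = ∑ p ∈ G.finsetWalkLength k u v, walkGain φ p := by
  induction k generalizing u v with
  | zero => obtain rfl | h := eq_or_ne u v <;> simp [finsetWalkLength, one_apply, *]
  | succ k ih =>
    rw [pow_succ', mul_apply, finsetWalkLength, sum_biUnion]
    · simp only [gainAdj, ite_mul, zero_mul, ← sum_filter, ih]
      rw [sum_subtype _ (p := (· ∈ G.neighborSet u)) (fun w => by simp)]
      refine sum_congr rfl fun w _ => ?_
      rw [sum_map, mul_sum]
      exact sum_congr rfl fun p _ => (walkGain_cons w.2 p).symm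
    · rintro ⟨x, hx⟩ - ⟨y, hy⟩ - hxy
      rw [Function.onFun, disjoint_iff_inf_le]
      intro p hp
      simp only [inf_eq_inter, mem_inter, mem_map] at hp
      obtain ⟨⟨px, _, rfl⟩, ⟨py, hpy, hp⟩⟩ := hp
      cases hp
      simp at hxy

lemma trace_gainAdj_pow (k : ℕ) :
    (gainAdj G φ ^ k).trace =
      ∑ c ∈ univ.sigma fun v => G.finsetWalkLength k v v, walkGain φ c.2 := by
  simp only [trace, Matrix.diag, gainAdj_pow_apply, sum_sigma]

lemma isBalanced_of_trace_pow_eq [DecidableRel G.Adj] (hφ : IsGain G φ)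
    (h : ∀ k : ℕ, (gainAdj G φ ^ k).trace = (G.adjMatrix ℂ ^ k).trace) : IsBalanced G φ := by
  intro v c _
  have hk := h c.length
  rw [adjMatrix_eq_gainAdj_const_one, trace_gainAdj_pow, trace_gainAdj_pow] at hk
  simp only [walkGain_const_one, sum_const, nsmul_eq_mul, mul_one] at hk
  exact forall_eq_one_of_sum_eq_card (fun c _ => (norm_walkGain hφ c.2).le) hk ⟨v, c⟩
    (by simp [mem_finsetWalkLength_iff])

end GainAdj

/-- For a connected `𝕋`-gain graph `Φ = (G, φ)`, the multiset of
eigenvalues of `A(Φ)` equals that of `A(G)` iff `Φ` is balanced. -/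
theorem cospectral_iff_balanced {n : ℕ} (G : SimpleGraph (Fin n)) [DecidableRel G.Adj]
    (hconn : G.Connected) (φ : Fin n → Fin n → ℂ) (hφ : IsGain G φ)
    (hA : (gainAdj G φ).IsHermitian) (hG : (G.adjMatrix ℂ).IsHermitian) :
    Finset.univ.val.map hA.eigenvalues = Finset.univ.val.map hG.eigenvalues ↔
      IsBalanced G φ :=
  ⟨fun h => isBalanced_of_trace_pow_eq hφ (hA.trace_pow_eq_of_eigenvalues_eq hG h),
    fun hb => hA.eigenvalues_eq_of_charpoly_eq hG (hb.charpoly_gainAdj hconn hφ)⟩
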